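/- Let B be the bipath poset, with underlying set (ℝ × {1,2}) ⊔ {−∞, +∞}, and let I and J be intervals of B both containing +∞ and not equal to B (type R intervals). Then Hom_B(k_I, k_J) ≠ 0 if and only if I ⊆ J. -/

import Mathlib

open CategoryTheory NNReal

/-- The upset `C^↑` generated by a subset of a poset. -/
def genUpset {P : Type} [PartialOrder P] (C : Set P) : Set P := {p | ∃ a ∈ C, a ≤ p}

/-- The downset `C^↓` generated by a subset of a poset. -/
def genDownset {P : Type} [PartialOrder P] (C : Set P) : Set P := {p | ∃ a ∈ C, p ≤ a}

/-- Convexity of a subset of a poset. -/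
def IsOrdConvex {P : Type} [PartialOrder P] (C : Set P) : Prop :=
  ∀ ⦃p q r : P⦄, p ∈ C → q ∈ C → p ≤ r → r ≤ q → r ∈ C

/-- Connectivity of a subset of a poset: any two elements are joined by a
fence of pairwise comparable elements inside the subset. -/
def IsFenceConnected {P : Type} [PartialOrder P] (C : Set P) : Prop :=
  ∀ ⦃p⦄, p ∈ C → ∀ ⦃q⦄, q ∈ C →
    Relation.ReflTransGen (fun a b => a ∈ C ∧ b ∈ C ∧ (a ≤ b ∨ b ≤ a)) p q

/-- An interval of a poset: a convex and connected subset. -/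
def IsItv {P : Type} [PartialOrder P] (C : Set P) : Prop :=
  IsOrdConvex C ∧ IsFenceConnected C

/-- `C` is a connected component of the subset `S` of a poset. -/
def IsFenceComponent {P : Type} [PartialOrder P] (S C : Set P) : Prop :=
  ∃ p ∈ S, C = {q | q ∈ S ∧
    Relation.ReflTransGen (fun a b => a ∈ S ∧ b ∈ S ∧ (a ≤ b ∨ b ≤ a)) p q}

attribute [local instance] Classical.propDecidable

/-- The interval module `k_I` attached to a convex subset `I` of a poset `P`:
it is `k` (here presented as `PLift (p ∈ I) → k`) at points of `I` with
identity structure maps inside `I`, and `0` elsewhere. -/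
noncomputable def itvMod (k : Type) [Field k] {P : Type} [PartialOrder P]
    (I : Set P) (hI : IsOrdConvex I) : P ⥤ ModuleCat k where
  obj p := ModuleCat.of k (PLift (p ∈ I) → k)
  map {p q} _ := ModuleCat.ofHom
    { toFun := fun v _ => if hp : p ∈ I then v ⟨hp⟩ else 0
      map_add' := by
        intro v w; funext hq; by_cases hp : p ∈ I <;> simp [hp] <;> first | rfl | exact (add_zero (0:k)).symm
      map_smul' := by
        intro c v; funext hq; by_cases hp : p ∈ I <;> simp [hp] <;> first | rfl | exact (smul_zero c).symm }
  map_id p := by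
    apply ModuleCat.hom_ext
    apply LinearMap.ext; intro v; funext hq
    rcases hq with ⟨hq⟩
    simp [hq] <;> try rfl
  map_comp {p q r} f g := by
    apply ModuleCat.hom_ext
    apply LinearMap.ext; intro v; funext hr
    rcases hr with ⟨hr⟩
    by_cases hp : p ∈ I
    · have hq : q ∈ I := hI hp hr (leOfHom f) (leOfHom g)
      simp [hp, hq] <;> try rfl
    · by_cases hq : q ∈ I <;> simp [hp, hq] <;> try rfl

/-- The (continuous) bipath poset `B`: two copies of `ℝ` (`up` and `down`)
joined at a global minimum `-∞` (`bot`) and a global maximum `+∞` (`top`),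
with the two copies of `ℝ` mutually incomparable. -/
inductive Bipath : Type
  | bot : Bipath
  | top : Bipath
  | up : ℝ → Bipath
  | down : ℝ → Bipath

namespace Bipath

/-- The order relation of the bipath poset. -/
def le : Bipath → Bipath → Prop
  | bot, _ => True
  | _, top => True
  | up r, up s => r ≤ s
  | down r, down s => r ≤ s
  | _, _ => False

instance : PartialOrder Bipath where
  le := Bipath.le
  le_refl x := by cases x <;> simp [Bipath.le]
  le_trans x y z hxy hyz := by
    cases x <;> cases y <;> cases z <;> simp_all [Bipath.le] <;> linarith
  le_antisymm x y h1 h2 := by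
    cases x <;> cases y <;> simp_all [Bipath.le] <;> linarith

theorem le_iff (x y : Bipath) : x ≤ y ↔ Bipath.le x y := Iff.rfl

/-- Shifting the bipath poset by `ε`: real coordinates are translated by `ε`
and `±∞` are fixed. -/
def shift (ε : ℝ) : Bipath → Bipath
  | bot => bot
  | top => top
  | up r => up (r + ε)
  | down r => down (r + ε)

theorem shift_mono (ε : ℝ) : Monotone (shift ε) := by
  intro x y h
  cases x <;> cases y <;> simp_all [shift, le_iff, Bipath.le]

theorem le_shift (ε : ℝ) (hε : 0 ≤ ε) (p : Bipath) : p ≤ shift ε p := by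
  cases p <;> simp [shift, le_iff, Bipath.le] <;> linarith

theorem shift_neg_shift (ε : ℝ) (p : Bipath) : shift (-ε) (shift ε p) = p := by
  cases p <;> simp [shift]

/-- The shift by `ε` as an order isomorphism of the bipath poset. -/
def shiftIso (ε : ℝ) : Bipath ≃o Bipath where
  toFun := shift ε
  invFun := shift (-ε)
  left_inv p := by cases p <;> simp [shift]
  right_inv p := by cases p <;> simp [shift]
  map_rel_iff' := by
    intro p q
    constructor
    · intro h
      have h2 := shift_mono (-ε) h
      simp only [Equiv.coe_fn_mk] at h2
      rwa [shift_neg_shift, shift_neg_shift] at h2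
    · exact fun h => shift_mono ε h

end Bipath

namespace BipathProof

theorem le_top' (q : Bipath) : q ≤ Bipath.top := by
  rw [Bipath.le_iff]; cases q <;> trivial

theorem upset_of_top {I : Set Bipath} (hI : IsOrdConvex I) (htop : Bipath.top ∈ I)
    {p q : Bipath} (hp : p ∈ I) (hpq : p ≤ q) : q ∈ I :=
  hI hp htop hpq (le_top' q)

noncomputable def homApp (k : Type) [Field k] {P : Type} [PartialOrder P]
    (I J : Set P) (p : P) :
    (PLift (p ∈ I) → k) →ₗ[k] (PLift (p ∈ J) → k) where
  toFun v _ := if hp : p ∈ I then v ⟨hp⟩ else 0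
  map_add' v w := by
    funext hq
    by_cases hp : p ∈ I
    · simp only [dif_pos hp, Pi.add_apply]
    · simp only [dif_neg hp, Pi.add_apply, add_zero]
  map_smul' c v := by
    funext hq
    by_cases hp : p ∈ I
    · simp only [dif_pos hp, Pi.smul_apply, RingHom.id_apply]
    · simp only [dif_neg hp, Pi.smul_apply, RingHom.id_apply, smul_zero]

end BipathProof

/-- For type-`R` intervals `I`, `J` of the bipath poset (both containing `+∞`
and different from the whole poset), `Hom_B(k_I, k_J) ≠ 0` iff `I ⊆ J`. -/
theorem hom_ne_zero_iff_subset_typeR (k : Type) [Field k]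
    {I J : Set Bipath} (hI : IsItv I) (hJ : IsItv J)
    (hIR : Bipath.top ∈ I ∧ I ≠ Set.univ) (hJR : Bipath.top ∈ J ∧ J ≠ Set.univ) :
    (∃ φ : itvMod k I hI.1 ⟶ itvMod k J hJ.1, φ ≠ 0) ↔ I ⊆ J := by
  have htopI : Bipath.top ∈ I := hIR.1
  have htopJ : Bipath.top ∈ J := hJR.1
  constructor
  · rintro ⟨φ, hφ⟩
    intro q hqI
    by_contra hqJ
    -- First, `φ.app top = 0`, using naturality along `q ⟶ top`.
    have happtop : φ.app Bipath.top = 0 := by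
      have hnat := φ.naturality (homOfLE (BipathProof.le_top' q))
      replace hnat := congrArg ModuleCat.Hom.hom hnat
      rw [ModuleCat.hom_comp, ModuleCat.hom_comp] at hnat
      apply ModuleCat.hom_ext
      apply LinearMap.ext
      intro w
      have hv := LinearMap.congr_fun hnat (fun _ => w ⟨htopI⟩)
      erw [LinearMap.comp_apply, LinearMap.comp_apply] at hv
      have hv2 : (φ.app Bipath.top).hom (fun _ => w ⟨htopI⟩) ⟨htopJ⟩ = 0 := by
        have h := congrFun hv ⟨htopJ⟩
        simp only [itvMod, ModuleCat.hom_ofHom, LinearMap.coe_comp, Function.comp_apply,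
          LinearMap.coe_mk, AddHom.coe_mk, dif_pos hqI, dif_neg hqJ] at h
        exact h
      have hw : (fun (_ : PLift (Bipath.top ∈ I)) => w ⟨htopI⟩) = w := by
        funext ht; exact congrArg w (Subsingleton.elim _ _)
      rw [hw] at hv2
      rw [ModuleCat.hom_zero, LinearMap.zero_apply]
      funext ht
      have hts : ht = ⟨htopJ⟩ := Subsingleton.elim _ _
      rw [hts]
      exact hv2
    -- Hence every component of `φ` vanishes.
    apply hφ
    ext p v
    show (φ.app p).hom v = 0
    by_cases hpJ : p ∈ J
    · by_cases hpI : p ∈ I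
      · have hnat := φ.naturality (homOfLE (BipathProof.le_top' p))
        replace hnat := congrArg ModuleCat.Hom.hom hnat
        rw [ModuleCat.hom_comp, ModuleCat.hom_comp] at hnat
        have hv := LinearMap.congr_fun hnat v
        rw [LinearMap.comp_apply, LinearMap.comp_apply, happtop, ModuleCat.hom_zero, LinearMap.zero_apply] at hv
        have hv2 := congrFun hv ⟨htopJ⟩
        simp only [itvMod, ModuleCat.hom_ofHom, LinearMap.coe_mk, AddHom.coe_mk, dif_pos hpI, dif_pos hpJ] at hv2
        funext ht
        have hts : ht = ⟨hpJ⟩ := Subsingleton.elim _ _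
        rw [hts]
        exact hv2.symm
      · have hv0 : v = 0 := by funext ht; exact absurd ht.down hpI
        rw [hv0, map_zero]
    · funext ht; exact absurd ht.down hpJ
  · intro hIJ
    refine ⟨{ app := fun p => ModuleCat.ofHom (BipathProof.homApp k I J p),
                naturality := ?_ }, ?_⟩
    · intro p q f
      apply ModuleCat.hom_ext
      erw [ModuleCat.hom_comp, ModuleCat.hom_comp]
      apply LinearMap.ext
      intro v
      rw [LinearMap.comp_apply, LinearMap.comp_apply]
      funext hq
      show (if hq' : q ∈ I then (if hp' : p ∈ I then v ⟨hp'⟩ else 0) else 0)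
         = (if hp' : p ∈ J then (if hp'' : p ∈ I then v ⟨hp''⟩ else 0) else 0)
      by_cases hpI : p ∈ I
      · have hqI : q ∈ I := BipathProof.upset_of_top hI.1 htopI hpI (leOfHom f)
        have hpJ : p ∈ J := hIJ hpI
        rw [dif_pos hqI, dif_pos hpJ]
      · rw [dif_neg hpI]
        by_cases hqI : q ∈ I <;> by_cases hpJ : p ∈ J <;>
          simp [hqI, hpJ]
    · intro h0
      have happ := congrArg (fun ψ : itvMod k I hI.1 ⟶ itvMod k J hJ.1 =>
        NatTrans.app ψ Bipath.top) h0
      have h1 := congrFun (LinearMap.congr_fun (congrArg ModuleCat.Hom.hom happ) (fun _ => (1:k))) ⟨htopJ⟩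
      simp only [Limits.zero_app, ModuleCat.hom_ofHom, ModuleCat.hom_zero, BipathProof.homApp, LinearMap.coe_mk, AddHom.coe_mk,
        dif_pos htopI, LinearMap.zero_apply, Pi.zero_apply] at h1
      exact one_ne_zero h1
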